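/- arXiv:1705.03120 — 3 statements merged into one kernel-verified Lean document; each statement's English description precedes it below -/
import Mathlib

section
/- For any unit-direction velocity vector v in R^3 with |v| < 1, any exponent ε with 0 < ε < 1/2, and any t ≥ 0, the integral over R^3 of ⟨x⟩^{1+2ε} · ⟨x⟩^{-8} · ⟨x − v t⟩^{-2} dx is bounded by C(ε,|v|) · ⟨t⟩^{-2}, where ⟨y⟩ = (1+|y|^2)^{1/2}. -/
open MeasureTheory

noncomputable section

abbrev E3 := EuclideanSpace ℝ (Fin 3)

/-- Japanese bracket on `ℝ³`. -/
def jb (y : E3) : ℝ := Real.sqrt (1 + ‖y‖ ^ 2)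

/-- Japanese bracket on `ℝ`. -/
def jbR (t : ℝ) : ℝ := Real.sqrt (1 + t ^ 2)

lemma jb_one_le (y : E3) : 1 ≤ jb y := by
  rw [jb]
  nlinarith [Real.sq_sqrt (show (0:ℝ) ≤ 1 + ‖y‖ ^ 2 by positivity),
    Real.sqrt_nonneg (1 + ‖y‖ ^ 2), sq_nonneg ‖y‖]

lemma jb_pos (y : E3) : 0 < jb y := lt_of_lt_of_le one_pos (jb_one_le y)

lemma jb_rpow_neg_two (y : E3) : jb y ^ (-(2:ℝ)) = (1 + ‖y‖ ^ 2)⁻¹ := by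
  rw [Real.rpow_neg (jb_pos y).le, show ((2:ℝ)) = ((2:ℕ):ℝ) by norm_num,
    Real.rpow_natCast, jb, Real.sq_sqrt (by positivity)]

lemma jb_rpow (y : E3) (c : ℝ) : jb y ^ c = (1 + ‖y‖ ^ 2) ^ (c / 2) := by
  rw [jb, Real.sqrt_eq_rpow, ← Real.rpow_mul (by positivity)]
  ring_nf

lemma inv_le_four_inv {a b : ℝ} (ha : 0 < a) (hb : 0 < b) (h : a ≤ 4 * b) :
    b⁻¹ ≤ 4 * a⁻¹ := by
  rw [show (4:ℝ) * a⁻¹ = 4 / a by ring, le_div_iff₀ ha, inv_mul_eq_div, div_le_iff₀ hb]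
  linarith

/-- Core pointwise bound. -/
lemma pointwise_bound (ε : ℝ) (hε1 : ε < 1 / 2) (x w : E3) :
    jb x ^ (2 * ε - 7) * jb (x - w) ^ (-(2:ℝ))
      ≤ 4 * (1 + ‖w‖ ^ 2)⁻¹ * jb x ^ (2 * ε - 5) := by
  have htri : ‖w‖ ≤ ‖x‖ + ‖x - w‖ := by
    have := norm_sub_le x (x - w)
    simpa using this
  have hxpos := jb_pos x
  have hx1 := jb_one_le x
  have hKpos : (0:ℝ) < 4 * (1 + ‖w‖ ^ 2)⁻¹ := by positivity
  rcases le_or_gt (‖w‖ / 2) ‖x‖ with h | h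
  · -- |x| large
    have hsplit : jb x ^ (2 * ε - 7) = jb x ^ (2 * ε - 5) * jb x ^ (-(2:ℝ)) := by
      rw [← Real.rpow_add hxpos]; ring_nf
    have h1 : jb x ^ (-(2:ℝ)) ≤ 4 * (1 + ‖x‖ ^ 2)⁻¹ * 0 + 4 * (1 + ‖w‖ ^ 2)⁻¹ := by
      rw [jb_rpow_neg_two]
      rw [div_le_iff₀ (by norm_num)] at h
      have hw : 1 + ‖w‖ ^ 2 ≤ 4 * (1 + ‖x‖ ^ 2) := by nlinarith [norm_nonneg w, norm_nonneg x]
      have := inv_le_four_inv (a := 1 + ‖w‖ ^ 2) (b := 1 + ‖x‖ ^ 2)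
        (by positivity) (by positivity) hw
      linarith
    have h1' : jb x ^ (-(2:ℝ)) ≤ 4 * (1 + ‖w‖ ^ 2)⁻¹ := by linarith
    have h2 : jb (x - w) ^ (-(2:ℝ)) ≤ 1 :=
      Real.rpow_le_one_of_one_le_of_nonpos (jb_one_le _) (by norm_num)
    have hA : jb x ^ (-(2:ℝ)) * jb (x - w) ^ (-(2:ℝ)) ≤ (4 * (1 + ‖w‖ ^ 2)⁻¹) * 1 :=
      mul_le_mul h1' h2 (Real.rpow_nonneg (jb_pos _).le _) hKpos.le
    rw [hsplit]
    nlinarith [Real.rpow_nonneg hxpos.le (2 * ε - 5), hA]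
  · -- |x - w| large
    have hxw : ‖w‖ / 2 ≤ ‖x - w‖ := by linarith
    have h1 : jb x ^ (2 * ε - 7) ≤ jb x ^ (2 * ε - 5) :=
      Real.rpow_le_rpow_of_exponent_le hx1 (by linarith)
    have h2 : jb (x - w) ^ (-(2:ℝ)) ≤ 4 * (1 + ‖w‖ ^ 2)⁻¹ := by
      rw [jb_rpow_neg_two]
      rw [div_le_iff₀ (by norm_num)] at hxw
      have hw : 1 + ‖w‖ ^ 2 ≤ 4 * (1 + ‖x - w‖ ^ 2) := by
        nlinarith [norm_nonneg w, norm_nonneg (x - w)]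
      exact inv_le_four_inv (by positivity) (by positivity) hw
    have hA := mul_le_mul h1 h2 (Real.rpow_nonneg (jb_pos _).le _)
      (Real.rpow_nonneg hxpos.le _)
    nlinarith [hA]

theorem stmt0 (v : E3) (hv0 : 0 < ‖v‖) (hv1 : ‖v‖ < 1)
    (ε : ℝ) (hε0 : 0 < ε) (hε1 : ε < 1 / 2) :
    ∃ C : ℝ, 0 < C ∧ ∀ t : ℝ, 0 ≤ t →
      (∫ x : E3, jb x ^ (1 + 2 * ε) * jb x ^ (-(8 : ℝ)) * jb (x - t • v) ^ (-(2 : ℝ)))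
        ≤ C * jbR t ^ (-(2 : ℝ)) := by
  have hfin : ((Module.finrank ℝ E3 : ℝ)) < 5 - 2 * ε := by
    have : Module.finrank ℝ E3 = 3 := by simp [finrank_euclideanSpace_fin]
    rw [this]; norm_num; linarith
  have hI : Integrable (fun x : E3 => jb x ^ (2 * ε - 5)) := by
    have := integrable_rpow_neg_one_add_norm_sq (E := E3) (μ := volume) hfin
    have he : -(5 - 2 * ε) / 2 = (2 * ε - 5) / 2 := by ring
    refine this.congr (ae_of_all _ fun x => ?_)
    simp only [jb_rpow, he]
  set I : ℝ := ∫ x : E3, jb x ^ (2 * ε - 5) with hIdef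
  have hI0 : 0 ≤ I := integral_nonneg fun x => Real.rpow_nonneg (jb_pos x).le _
  refine ⟨4 * (‖v‖ ^ 2)⁻¹ * (I + 1), by positivity, fun t ht => ?_⟩
  have hjbR : jbR t ^ (-(2:ℝ)) = (1 + t ^ 2)⁻¹ := by
    rw [jbR, Real.rpow_neg (Real.sqrt_nonneg _), show ((2:ℝ)) = ((2:ℕ):ℝ) by norm_num,
      Real.rpow_natCast, Real.sq_sqrt (by positivity)]
  have hw : ‖t • v‖ ^ 2 = t ^ 2 * ‖v‖ ^ 2 := by
    rw [norm_smul, Real.norm_eq_abs, abs_of_nonneg ht, mul_pow]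
  have step1 : (∫ x : E3, jb x ^ (1 + 2 * ε) * jb x ^ (-(8 : ℝ)) * jb (x - t • v) ^ (-(2 : ℝ)))
      ≤ ∫ x : E3, 4 * (1 + ‖t • v‖ ^ 2)⁻¹ * jb x ^ (2 * ε - 5) := by
    refine integral_mono_of_nonneg (ae_of_all _ fun x => ?_)
      ((hI.const_mul _)) (ae_of_all _ fun x => ?_)
    · have := jb_pos x; have := jb_pos (x - t • v); positivity
    · have hcomb : jb x ^ (1 + 2 * ε) * jb x ^ (-(8:ℝ)) = jb x ^ (2 * ε - 7) := by
        rw [← Real.rpow_add (jb_pos x)]; ring_nf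
      show jb x ^ (1 + 2 * ε) * jb x ^ (-(8:ℝ)) * jb (x - t • v) ^ (-(2:ℝ))
          ≤ 4 * (1 + ‖t • v‖ ^ 2)⁻¹ * jb x ^ (2 * ε - 5)
      rw [hcomb]
      exact pointwise_bound ε hε1 x (t • v)
  have step2 : (∫ x : E3, 4 * (1 + ‖t • v‖ ^ 2)⁻¹ * jb x ^ (2 * ε - 5))
      = 4 * (1 + ‖t • v‖ ^ 2)⁻¹ * I := integral_const_mul _ _
  have hv2 : ‖v‖ ^ 2 ≤ 1 := by nlinarith
  have hkey : (1 + ‖t • v‖ ^ 2)⁻¹ ≤ (‖v‖ ^ 2)⁻¹ * (1 + t ^ 2)⁻¹ := by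
    rw [hw, ← mul_inv]
    apply inv_anti₀
    · positivity
    · nlinarith
  have hKpos : (0:ℝ) < (1 + ‖t • v‖ ^ 2)⁻¹ := by positivity
  calc (∫ x : E3, jb x ^ (1 + 2 * ε) * jb x ^ (-(8 : ℝ)) * jb (x - t • v) ^ (-(2 : ℝ)))
      ≤ 4 * (1 + ‖t • v‖ ^ 2)⁻¹ * I := by rw [← step2]; exact step1
    _ ≤ 4 * ((‖v‖ ^ 2)⁻¹ * (1 + t ^ 2)⁻¹) * (I + 1) := by
        refine mul_le_mul (by linarith) (by linarith) hI0 (by positivity)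
    _ = 4 * (‖v‖ ^ 2)⁻¹ * (I + 1) * jbR t ^ (-(2:ℝ)) := by rw [hjbR]; ring

end
end

section
/- Let v ∈ R^3 with 0 < |v| < 1, 0 < ε < 1/2, and let H(x,t) = ⟨x⟩^{-4} ⟨x − v t⟩^{-1}. Then the function (x,t) ↦ ⟨x⟩^{1/2+ε} H(x,t) belongs to L^2 of R^3 × [0,∞), and moreover its L^2 norm over R^3 × [t₁,∞) is bounded by C t₁^{-1/2} for t₁ ≥ 1. -/
open MeasureTheory

noncomputable section

/-- The interaction term `H(x,t) = ⟨x⟩⁻⁴⟨x − vt⟩⁻¹`. -/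
def Hfun (v : E3) (x : E3) (t : ℝ) : ℝ :=
  jb x ^ (-(4 : ℝ)) * jb (x - t • v) ^ (-(1 : ℝ))

lemma jb_sq (y : E3) : jb y ^ 2 = 1 + ‖y‖ ^ 2 := by
  rw [jb, Real.sq_sqrt]; positivity

lemma peetre (x y : E3) : jb y ^ 2 ≤ 2 * jb (x - y) ^ 2 * jb x ^ 2 := by
  rw [jb_sq, jb_sq, jb_sq]
  have h1 : ‖y‖ ≤ ‖x - y‖ + ‖x‖ := by
    calc ‖y‖ = ‖x - (x - y)‖ := by congr 1; abel
    _ ≤ ‖x‖ + ‖x - y‖ := norm_sub_le _ _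
    _ = ‖x - y‖ + ‖x‖ := by ring
  nlinarith [norm_nonneg y, norm_nonneg (x - y), norm_nonneg x, sq_nonneg (‖x - y‖ - ‖x‖),
    sq_nonneg (‖x - y‖ * ‖x‖)]

/-- Central pointwise bound. -/
lemma central (v x : E3) (t ε : ℝ) :
    (jb x ^ ((1 : ℝ) / 2 + ε) * Hfun v x t) ^ 2
      ≤ 2 * jb x ^ (2 * ε - 5) * (jb (t • v) ^ 2)⁻¹ := by
  set A := jb x with hA
  set B := jb (x - t • v) with hB
  set D := jb (t • v) with hD
  have hA0 : (0:ℝ) < A := jb_pos x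
  have hB0 : (0:ℝ) < B := jb_pos _
  have hD0 : (0:ℝ) < D := jb_pos _
  have e1 : (A ^ ((1 : ℝ) / 2 + ε) * Hfun v x t) ^ 2
      = A ^ (2 * ε - 7) * (B ^ 2)⁻¹ := by
    rw [Hfun, ← hA, ← hB, ← mul_assoc, ← Real.rpow_add hA0, mul_pow,
      ← Real.rpow_natCast (A ^ _) 2, ← Real.rpow_natCast (B ^ _) 2,
      ← Real.rpow_mul hA0.le, ← Real.rpow_mul hB0.le]
    push_cast
    rw [show ((1:ℝ)/2 + ε + -4) * 2 = 2 * ε - 7 by ring, show (-(1:ℝ)) * 2 = -2 by ring,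
      Real.rpow_neg hB0.le, Real.rpow_two]
  rw [e1]
  have hpe : D ^ 2 ≤ 2 * B ^ 2 * A ^ 2 := peetre x (t • v)
  have h2 : (B ^ 2)⁻¹ ≤ 2 * A ^ 2 * (D ^ 2)⁻¹ := by
    rw [← one_div, ← div_eq_mul_inv, div_le_div_iff₀ (by positivity) (by positivity)]
    nlinarith
  have h3 : A ^ (2 * ε - 7) * A ^ (2:ℝ) = A ^ (2 * ε - 5) := by
    rw [← Real.rpow_add hA0]; ring_nf
  calc A ^ (2 * ε - 7) * (B ^ 2)⁻¹ ≤ A ^ (2 * ε - 7) * (2 * A ^ 2 * (D ^ 2)⁻¹) := by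
        have : (0:ℝ) ≤ A ^ (2 * ε - 7) := Real.rpow_nonneg hA0.le _
        gcongr
    _ = 2 * (A ^ (2 * ε - 7) * A ^ (2:ℝ)) * (D ^ 2)⁻¹ := by
        rw [Real.rpow_two]; ring
    _ = 2 * A ^ (2 * ε - 5) * (D ^ 2)⁻¹ := by rw [h3]

lemma jb_smul_sq (v : E3) (t : ℝ) : jb (t • v) ^ 2 = 1 + t ^ 2 * ‖v‖ ^ 2 := by
  rw [jb_sq, norm_smul]
  simp [mul_pow, sq_abs]

theorem stmt1 (v : E3) (hv0 : 0 < ‖v‖) (hv1 : ‖v‖ < 1)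
    (ε : ℝ) (hε0 : 0 < ε) (hε1 : ε < 1 / 2) :
    (∫⁻ p : ℝ × E3 in Set.Ici (0 : ℝ) ×ˢ Set.univ,
        ENNReal.ofReal ((jb p.2 ^ ((1 : ℝ) / 2 + ε) * Hfun v p.2 p.1) ^ 2)) < ⊤ ∧
    ∃ C : ℝ, 0 < C ∧ ∀ t₁ : ℝ, 1 ≤ t₁ →
      (∫⁻ p : ℝ × E3 in Set.Ici t₁ ×ˢ Set.univ,
          ENNReal.ofReal ((jb p.2 ^ ((1 : ℝ) / 2 + ε) * Hfun v p.2 p.1) ^ 2)) ^ ((1 : ℝ) / 2)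
        ≤ ENNReal.ofReal (C * t₁ ^ (-(1 : ℝ) / 2)) := by
  -- the spatial factor
  set G : E3 → ℝ := fun x => 2 / ‖v‖ ^ 2 * jb x ^ (2 * ε - 5) with hG
  have hG0 : ∀ x, 0 ≤ G x := fun x => by
    have := (jb_pos x).le
    positivity
  have hGeq : ∀ x : E3, G x = 2 / ‖v‖ ^ 2 * ((1 : ℝ) + ‖x‖ ^ 2) ^ (-(5 - 2 * ε) / 2) := by
    intro x
    simp only [hG, jb, Real.sqrt_eq_rpow]
    rw [← Real.rpow_mul (by positivity),
      show (1:ℝ)/2 * (2 * ε - 5) = -(5 - 2 * ε)/2 by ring]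
  have hGint : Integrable G := by
    have h3 : ((Module.finrank ℝ E3 : ℝ)) < 5 - 2 * ε := by
      simp [finrank_euclideanSpace_fin]; linarith
    have := (integrable_rpow_neg_one_add_norm_sq (E := E3) (μ := volume) h3).const_mul
      (2 / ‖v‖ ^ 2)
    exact this.congr (Filter.Eventually.of_forall fun x => (hGeq x).symm)
  have hGmeas : Measurable G := by
    rw [funext hGeq]
    fun_prop
  set IG : ENNReal := ∫⁻ x : E3, ENNReal.ofReal (G x) with hIG
  have hIGfin : IG < ⊤ := hGint.lintegral_lt_top
  -- the key pointwise inequality, in ℝ≥0∞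
  have key : ∀ (t : ℝ) (x : E3),
      ENNReal.ofReal ((jb x ^ ((1 : ℝ) / 2 + ε) * Hfun v x t) ^ 2)
        ≤ ENNReal.ofReal ((1 + t ^ 2)⁻¹) * ENNReal.ofReal (G x) := by
    intro t x
    rw [← ENNReal.ofReal_mul (by positivity)]
    apply ENNReal.ofReal_le_ofReal
    calc (jb x ^ ((1 : ℝ) / 2 + ε) * Hfun v x t) ^ 2
        ≤ 2 * jb x ^ (2 * ε - 5) * (jb (t • v) ^ 2)⁻¹ := central v x t ε
      _ ≤ 2 * jb x ^ (2 * ε - 5) * (‖v‖ ^ 2 * (1 + t ^ 2))⁻¹ := by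
          have ha : (0:ℝ) ≤ 2 * jb x ^ (2 * ε - 5) := by
            have := Real.rpow_nonneg (jb_pos x).le (2 * ε - 5); linarith
          refine mul_le_mul_of_nonneg_left (inv_anti₀ (by positivity) ?_) ha
          rw [jb_smul_sq]; nlinarith [sq_nonneg t, sq_nonneg ‖v‖]
      _ = (1 + t ^ 2)⁻¹ * G x := by
          simp only [hG, mul_inv, div_eq_mul_inv]
          ring
  have key2 : ∀ (t : ℝ), 1 ≤ t → ∀ x : E3,
      ENNReal.ofReal ((jb x ^ ((1 : ℝ) / 2 + ε) * Hfun v x t) ^ 2)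
        ≤ ENNReal.ofReal (t ^ (-(2:ℝ))) * ENNReal.ofReal (G x) := by
    intro t ht x
    have ht0 : (0:ℝ) < t := lt_of_lt_of_le one_pos ht
    rw [← ENNReal.ofReal_mul (by positivity)]
    apply ENNReal.ofReal_le_ofReal
    calc (jb x ^ ((1 : ℝ) / 2 + ε) * Hfun v x t) ^ 2
        ≤ 2 * jb x ^ (2 * ε - 5) * (jb (t • v) ^ 2)⁻¹ := central v x t ε
      _ ≤ 2 * jb x ^ (2 * ε - 5) * (‖v‖ ^ 2 * t ^ 2)⁻¹ := by
          have ha : (0:ℝ) ≤ 2 * jb x ^ (2 * ε - 5) := by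
            have := Real.rpow_nonneg (jb_pos x).le (2 * ε - 5); linarith
          refine mul_le_mul_of_nonneg_left (inv_anti₀ (by positivity) ?_) ha
          rw [jb_smul_sq]; nlinarith
      _ = t ^ (-(2:ℝ)) * G x := by
          simp only [hG, Real.rpow_neg ht0.le, Real.rpow_two, mul_inv, div_eq_mul_inv]
          ring
  -- product formula
  have prod_eq : ∀ (s : Set ℝ) (h : ℝ → ℝ), Measurable h →
      (∫⁻ p : ℝ × E3 in s ×ˢ Set.univ,
        ENNReal.ofReal (h p.1) * ENNReal.ofReal (G p.2))
      = (∫⁻ t in s, ENNReal.ofReal (h t)) * IG := by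
    intro s h hh
    rw [hIG, Measure.volume_eq_prod, ← Measure.prod_restrict, Measure.restrict_univ]
    exact lintegral_prod_mul
      ((ENNReal.measurable_ofReal.comp hh).aemeasurable)
      ((ENNReal.measurable_ofReal.comp hGmeas).aemeasurable)
  constructor
  · -- finiteness on [0, ∞)
    have hb : (∫⁻ p : ℝ × E3 in Set.Ici (0:ℝ) ×ˢ Set.univ,
        ENNReal.ofReal ((jb p.2 ^ ((1 : ℝ) / 2 + ε) * Hfun v p.2 p.1) ^ 2))
        ≤ (∫⁻ t in Set.Ici (0:ℝ), ENNReal.ofReal ((1 + t ^ 2)⁻¹)) * IG := by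
      rw [← prod_eq (Set.Ici 0) (fun t => (1 + t ^ 2)⁻¹) (by fun_prop)]
      exact lintegral_mono fun p => key p.1 p.2
    refine lt_of_le_of_lt hb (ENNReal.mul_lt_top ?_ hIGfin)
    have hint : Integrable (fun t : ℝ => (1 + t ^ 2)⁻¹) := by
      simpa using integrable_inv_one_add_sq
    exact lt_of_le_of_lt (setLIntegral_le_lintegral _ _) hint.lintegral_lt_top
  · -- tail bound
    refine ⟨IG.toReal ^ ((1:ℝ)/2) + 1, by positivity, fun t₁ ht₁ => ?_⟩
    have ht₁0 : (0:ℝ) < t₁ := lt_of_lt_of_le one_pos ht₁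
    -- the t-integral
    have ht_int : (∫⁻ t in Set.Ici t₁, ENNReal.ofReal (t ^ (-(2:ℝ))))
        = ENNReal.ofReal (t₁ ^ (-(1:ℝ))) := by
      rw [MeasureTheory.setLIntegral_congr (Filter.EventuallyEq.symm Ioi_ae_eq_Ici)]
      rw [← ofReal_integral_eq_lintegral_ofReal
        (integrableOn_Ioi_rpow_of_lt (by norm_num) ht₁0)
        ((ae_restrict_iff' measurableSet_Ioi).2 (Filter.Eventually.of_forall
          fun t ht => Real.rpow_nonneg (le_of_lt (lt_trans ht₁0 ht)) _))]
      congr 1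
      rw [integral_Ioi_rpow_of_lt (by norm_num) ht₁0]
      norm_num
    have hb : (∫⁻ p : ℝ × E3 in Set.Ici t₁ ×ˢ Set.univ,
        ENNReal.ofReal ((jb p.2 ^ ((1 : ℝ) / 2 + ε) * Hfun v p.2 p.1) ^ 2))
        ≤ ENNReal.ofReal (t₁ ^ (-(1:ℝ))) * IG := by
      rw [← ht_int, ← prod_eq (Set.Ici t₁) (fun t => t ^ (-(2:ℝ))) (by fun_prop)]
      refine setLIntegral_mono' (measurableSet_Ici.prod MeasurableSet.univ) ?_
      rintro ⟨t, x⟩ ⟨ht, -⟩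
      exact key2 t (le_trans ht₁ ht) x
    calc (∫⁻ p : ℝ × E3 in Set.Ici t₁ ×ˢ Set.univ,
        ENNReal.ofReal ((jb p.2 ^ ((1 : ℝ) / 2 + ε) * Hfun v p.2 p.1) ^ 2)) ^ ((1:ℝ)/2)
        ≤ (ENNReal.ofReal (t₁ ^ (-(1:ℝ))) * IG) ^ ((1:ℝ)/2) := by
          exact ENNReal.rpow_le_rpow hb (by norm_num)
      _ = ENNReal.ofReal (t₁ ^ (-(1:ℝ))) ^ ((1:ℝ)/2) * IG ^ ((1:ℝ)/2) :=
          ENNReal.mul_rpow_of_nonneg _ _ (by norm_num)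
      _ ≤ ENNReal.ofReal (t₁ ^ (-(1:ℝ)/2)) * ENNReal.ofReal (IG.toReal ^ ((1:ℝ)/2)) := by
          gcongr
          · rw [ENNReal.ofReal_rpow_of_pos (Real.rpow_pos_of_pos ht₁0 _),
              ← Real.rpow_mul ht₁0.le]
            norm_num
          · rw [← ENNReal.ofReal_rpow_of_nonneg ENNReal.toReal_nonneg (by norm_num : (0:ℝ) ≤ 1/2),
              ENNReal.ofReal_toReal hIGfin.ne]
      _ ≤ ENNReal.ofReal ((IG.toReal ^ ((1:ℝ)/2) + 1) * t₁ ^ (-(1:ℝ)/2)) := by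
          rw [← ENNReal.ofReal_mul (by positivity)]
          apply ENNReal.ofReal_le_ofReal
          have h1 : (0:ℝ) ≤ t₁ ^ (-(1:ℝ)/2) := Real.rpow_nonneg ht₁0.le _
          nlinarith [Real.rpow_nonneg (ENNReal.toReal_nonneg : (0:ℝ) ≤ IG.toReal) ((1:ℝ)/2)]

end
end

section
/- Let R, β₁ be sufficiently large. There exist ε, δ > 0 such that: if b is a function on the exterior region B_R^c = {x ∈ R^3 : |x| > R} with sup_{x∈B_R^c} |x|^{β₁} |b(x)| < δ, then any solution u of −Δu + b(x)u + u^5 = 0 on B_R^c with u ≥ 1 on ∂B_R satisfies |u(x)| ≥ ε/|x| for all x ∈ B_R^c. -/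
/-!
Compare `u` with the barrier `φ = (1/‖x‖ + R/‖x‖²)/4`. Since `1/‖x‖` is harmonic,
`lap φ = R/(2‖x‖⁴)`, and wherever `u ≤ φ ≤ 1/(2‖x‖)` and `|b| ≤ 1/(2‖x‖⁴)` one has
`b u + u⁵ < lap φ`; so `u - φ` has no negative interior local minimum. On the sphere `u ≥ 1 > φ`,
and at infinity `φ → 0` while `u` cannot stay very negative: applied to `-u` on the ball of radius
`ρ = (‖x‖ - R)/2` around `x`, the Keller–Osserman barrier `2√ρ (ρ² - ‖y - x‖²)^(-1/2)` gives
`-u x ≤ 2/√ρ + 2/(‖x‖ + R)`. The minimum principle then yields `u ≥ φ ≥ 1/(4‖x‖)`.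
-/

open MeasureTheory

noncomputable section

/-- The Laplacian on `ℝ³`, as the sum of second partial derivatives. -/
def lap (f : E3 → ℝ) (x : E3) : ℝ :=
  ∑ i : Fin 3,
    fderiv ℝ (fun y => fderiv ℝ f y (EuclideanSpace.single i 1)) x (EuclideanSpace.single i 1)

open Filter Set Metric Topology Bornology
open scoped InnerProductSpace

theorem exists_isMinOn_ball_of_forall_le {X : Type*} [PseudoMetricSpace X] [ProperSpace X]
    {x₀ : X} {ρ : ℝ} {w : X → ℝ} (hw : ContinuousOn w (ball x₀ ρ)) (hρ : 0 < ρ)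
    (hlarge : ∀ M, ∃ r < ρ, ∀ y ∈ ball x₀ ρ, r < dist y x₀ → M ≤ w y) :
    ∃ z ∈ ball x₀ ρ, IsMinOn w (ball x₀ ρ) z := by
  obtain ⟨r, hrρ, hr⟩ := hlarge (w x₀)
  have hsub : closedBall x₀ (max r 0) ⊆ ball x₀ ρ := closedBall_subset_ball (max_lt hrρ hρ)
  obtain ⟨z, hz, hmin⟩ := (isCompact_closedBall x₀ (max r 0)).exists_isMinOn
    (nonempty_closedBall.2 (le_max_right r 0)) (hw.mono hsub)
  refine ⟨z, hsub hz, fun y hy => ?_⟩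
  by_cases hyr : dist y x₀ ≤ max r 0
  · exact hmin (mem_closedBall.2 hyr)
  · have hx₀ : w z ≤ w x₀ := hmin (mem_closedBall_self (le_max_right r 0))
    exact hx₀.trans (hr y hy ((le_max_left r 0).trans_lt (not_le.1 hyr)))

theorem nonneg_of_forall_not_isLocalMin {E : Type*} [NormedAddCommGroup E] [ProperSpace E]
    {R : ℝ} {w : E → ℝ} (hw : ContinuousOn w {x | R ≤ ‖x‖})
    (hsphere : ∀ x, ‖x‖ = R → 0 ≤ w x) (hinf : ∀ T > 0, ∀ᶠ x in cobounded E, -T < w x)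
    (hmin : ∀ x, R < ‖x‖ → w x < 0 → ¬IsLocalMin w x) {x : E} (hx : R < ‖x‖) : 0 ≤ w x := by
  by_contra! hneg
  obtain ⟨P, hP⟩ : ∃ P, ∀ y : E, P ≤ ‖y‖ → w x < w y := by
    have h := hinf (-w x) (by linarith)
    rw [← comap_norm_atTop, eventually_comap, eventually_atTop] at h
    obtain ⟨P, hP⟩ := h
    exact ⟨P, fun y hy => by simpa using hP ‖y‖ hy y rfl⟩
  set K := closedBall (0 : E) P ∩ {y | R ≤ ‖y‖}
  have hK : IsCompact K :=
    (isCompact_closedBall 0 P).inter_right (isClosed_le continuous_const continuous_norm)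
  have hxK : x ∈ K :=
    ⟨mem_closedBall_zero_iff.2 (not_le.1 fun h => (hP x h).false).le, hx.le⟩
  obtain ⟨z, hzK, hzmin⟩ := hK.exists_isMinOn ⟨x, hxK⟩ (hw.mono inter_subset_right)
  have hwz : w z ≤ w x := hzmin hxK
  have hzR : R < ‖z‖ := hzK.2.lt_of_ne fun h => by linarith [hsphere z h.symm]
  have hzP : ‖z‖ < P := not_le.1 fun h => by linarith [hP z h]
  have hnhds : {y : E | R < ‖y‖ ∧ ‖y‖ < P} ∈ 𝓝 z :=
    ((isOpen_lt continuous_const continuous_norm).inter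
      (isOpen_lt continuous_norm continuous_const)).mem_nhds ⟨hzR, hzP⟩
  exact hmin z hzR (by linarith) (hzmin.isLocalMin (mem_of_superset hnhds fun y hy =>
    ⟨mem_closedBall_zero_iff.2 hy.2.le, hy.1.le⟩))

section SecondDerivative

variable {E : Type*} [NormedAddCommGroup E] [NormedSpace ℝ E]

theorem IsLocalMin.deriv_deriv_nonneg {g : ℝ → ℝ} {a : ℝ} (hmin : IsLocalMin g a)
    (hc : ContinuousAt g a) : 0 ≤ deriv (deriv g) a := by
  by_contra! hneg
  have hmax := isLocalMax_of_deriv_deriv_neg hneg hmin.deriv_eq_zero hc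
  have hconst : g =ᶠ[𝓝 a] fun _ => g a :=
    (hmin.and hmax).mono fun t ht => le_antisymm ht.2 ht.1
  have hzero : deriv (deriv g) a = 0 := by
    rw [hconst.deriv.deriv_eq]
    simp
  exact hneg.ne hzero

theorem ContDiffAt.differentiableAt_fderiv_apply {f : E → ℝ} {x : E} (hf : ContDiffAt ℝ 2 f x)
    (e : E) : DifferentiableAt ℝ (fun y => fderiv ℝ f y e) x :=
  ((hf.fderiv_right (m := 1) (by norm_num)).differentiableAt one_ne_zero).clm_apply
    (differentiableAt_const e)

theorem IsLocalMin.fderiv_fderiv_apply_nonneg {f : E → ℝ} {x : E} (hmin : IsLocalMin f x)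
    (hf : ContDiffAt ℝ 2 f x) (e : E) : 0 ≤ fderiv ℝ (fun y => fderiv ℝ f y e) x e := by
  set line : ℝ → E := fun t => x + t • e
  have hline : ∀ t, HasDerivAt line e t := fun t => by
    simpa only [id, one_smul] using ((hasDerivAt_id t).smul_const e).const_add x
  have hline0 : line 0 = x := by simp [line]
  have hlim : Tendsto line (𝓝 0) (𝓝 x) := hline0 ▸ (hline 0).continuousAt.tendsto
  have hdiff : ∀ᶠ y in 𝓝 x, DifferentiableAt ℝ f y :=
    (hf.eventually (by simp)).mono fun y hy => hy.differentiableAt (by norm_num)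
  have hderiv : deriv (f ∘ line) =ᶠ[𝓝 0] fun t => fderiv ℝ f (line t) e :=
    (hlim.eventually hdiff).mono fun t ht => (ht.hasFDerivAt.comp_hasDerivAt t (hline t)).deriv
  have hsecond : HasDerivAt (fun t => fderiv ℝ f (line t) e)
      (fderiv ℝ (fun y => fderiv ℝ f y e) x e) 0 :=
    (hf.differentiableAt_fderiv_apply e).hasFDerivAt.comp_hasDerivAt_of_eq 0 (hline 0)
      hline0.symm
  have hmin' : IsLocalMin (f ∘ line) 0 := by
    rw [← hline0] at hmin
    exact hmin.comp_continuous (hline 0).continuousAt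
  have hc : ContinuousAt (f ∘ line) 0 :=
    (hf.continuousAt.comp_of_eq (hline 0).continuousAt hline0)
  simpa [hderiv.deriv_eq, hsecond.deriv] using hmin'.deriv_deriv_nonneg hc

end SecondDerivative

theorem lap_nonneg_of_isLocalMin {f : E3 → ℝ} {x : E3} (hf : ContDiffAt ℝ 2 f x)
    (hmin : IsLocalMin f x) : 0 ≤ lap f x :=
  Finset.sum_nonneg fun _ _ => hmin.fderiv_fderiv_apply_nonneg hf _

theorem lap_const_mul (a : ℝ) (f : E3 → ℝ) (x : E3) :
    lap (fun y => a * f y) x = a * lap f x := by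
  have h (g : E3 → ℝ) : fderiv ℝ (fun y => a * g y) = a • fderiv ℝ g :=
    fderiv_const_smul_field (f := g) a
  simp only [lap, Finset.mul_sum, h, Pi.smul_apply, smul_apply, smul_eq_mul]

theorem lap_neg (f : E3 → ℝ) (x : E3) : lap (fun y => -f y) x = -lap f x := by
  simpa using lap_const_mul (-1) f x

theorem lap_add {f g : E3 → ℝ} {x : E3} (hf : ContDiffAt ℝ 2 f x) (hg : ContDiffAt ℝ 2 g x) :
    lap (fun y => f y + g y) x = lap f x + lap g x := by
  simp only [lap, ← Finset.sum_add_distrib]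
  refine Finset.sum_congr rfl fun i _ => ?_
  set e : E3 := EuclideanSpace.single i 1
  have hdiff : ∀ᶠ y in 𝓝 x, DifferentiableAt ℝ f y ∧ DifferentiableAt ℝ g y :=
    ((hf.eventually (by simp)).and (hg.eventually (by simp))).mono fun y hy =>
      ⟨hy.1.differentiableAt (by norm_num), hy.2.differentiableAt (by norm_num)⟩
  have hfirst : (fun y => fderiv ℝ (fun z => f z + g z) y e)
      =ᶠ[𝓝 x] fun y => fderiv ℝ f y e + fderiv ℝ g y e :=
    hdiff.mono fun y hy => by simp only [fderiv_fun_add hy.1 hy.2]; rfl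
  rw [hfirst.fderiv_eq, fderiv_fun_add (hf.differentiableAt_fderiv_apply e)
    (hg.differentiableAt_fderiv_apply e)]
  rfl

theorem lap_sub {f g : E3 → ℝ} {x : E3} (hf : ContDiffAt ℝ 2 f x) (hg : ContDiffAt ℝ 2 g x) :
    lap (fun y => f y - g y) x = lap f x - lap g x := by
  simp only [sub_eq_add_neg]
  rw [lap_add hf hg.neg, lap_neg]

section Radial

variable {F : Type*} [NormedAddCommGroup F] [InnerProductSpace ℝ F]

theorem hasFDerivAt_normSq_sub (c y : F) :
    HasFDerivAt (fun z => ‖z - c‖ ^ 2) (2 • innerSL ℝ (y - c)) y := by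
  simpa using ((hasFDerivAt_id y).sub_const c).norm_sq

theorem fderiv_fderiv_apply_comp_normSq_sub {g g' : ℝ → ℝ} {g'' : ℝ} {c x : F}
    (hg : ∀ᶠ t in 𝓝 (‖x - c‖ ^ 2), HasDerivAt g (g' t) t)
    (hg' : HasDerivAt g' g'' (‖x - c‖ ^ 2)) (e : F) :
    fderiv ℝ (fun y => fderiv ℝ (fun z => g (‖z - c‖ ^ 2)) y e) x e
      = 2 * g' (‖x - c‖ ^ 2) * ‖e‖ ^ 2 + 4 * g'' * ⟪x - c, e⟫_ℝ ^ 2 := by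
  have hq : Tendsto (fun y : F => ‖y - c‖ ^ 2) (𝓝 x) (𝓝 (‖x - c‖ ^ 2)) :=
    (hasFDerivAt_normSq_sub c x).continuousAt.tendsto
  have hfirst : (fun y => fderiv ℝ (fun z => g (‖z - c‖ ^ 2)) y e) =ᶠ[𝓝 x]
      fun y => g' (‖y - c‖ ^ 2) * (2 * ⟪e, y - c⟫_ℝ) :=
    (hq.eventually hg).mono fun y hy => by
      have h : HasFDerivAt (fun z => g (‖z - c‖ ^ 2)) _ y :=
        hy.comp_hasFDerivAt y (hasFDerivAt_normSq_sub c y)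
      dsimp only
      rw [h.fderiv]
      simp only [smul_apply, innerSL_apply_apply, smul_eq_mul, nsmul_eq_mul, real_inner_comm e]
      ring
  have hinner : HasFDerivAt (fun y => 2 * ⟪e, y - c⟫_ℝ) ((2 : ℝ) • innerSL ℝ e) x := by
    simpa using (((innerSL ℝ e).hasFDerivAt).comp x ((hasFDerivAt_id x).sub_const c)).const_mul 2
  have hprod : HasFDerivAt (fun y => g' (‖y - c‖ ^ 2) * (2 * ⟪e, y - c⟫_ℝ)) _ x :=
    (hg'.comp_hasFDerivAt x (hasFDerivAt_normSq_sub c x)).mul hinner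
  rw [hfirst.fderiv_eq, hprod.fderiv]
  simp only [add_apply, smul_apply, innerSL_apply_apply,
    Function.comp_apply, smul_eq_mul, nsmul_eq_mul, real_inner_self_eq_norm_sq, real_inner_comm e]
  ring

end Radial

theorem lap_comp_normSq_sub {g g' : ℝ → ℝ} {g'' : ℝ} {c x : E3}
    (hg : ∀ᶠ t in 𝓝 (‖x - c‖ ^ 2), HasDerivAt g (g' t) t)
    (hg' : HasDerivAt g' g'' (‖x - c‖ ^ 2)) :
    lap (fun y => g (‖y - c‖ ^ 2)) x = 6 * g' (‖x - c‖ ^ 2) + 4 * ‖x - c‖ ^ 2 * g'' := by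
  have hsum : ∑ i : Fin 3, ⟪x - c, EuclideanSpace.single i 1⟫_ℝ ^ 2 = ‖x - c‖ ^ 2 := by
    simp [EuclideanSpace.norm_sq_eq, EuclideanSpace.inner_single_right]
  simp only [lap, fderiv_fderiv_apply_comp_normSq_sub hg hg', Finset.sum_add_distrib,
    ← Finset.mul_sum, hsum, PiLp.norm_single, norm_one, one_pow, Finset.sum_const,
    Finset.card_univ, Fintype.card_fin, nsmul_eq_mul]
  ring

theorem lap_norm_sub_rpow (p : ℝ) {c x : E3} (hx : x ≠ c) :
    lap (fun y => ‖y - c‖ ^ p) x = p * (p + 1) * ‖x - c‖ ^ (p - 2) := by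
  have hn : ‖x - c‖ ≠ 0 := norm_ne_zero_iff.2 (sub_ne_zero.2 hx)
  have hq : 0 < ‖x - c‖ ^ 2 := by positivity
  have hsq : ∀ y : E3, ∀ a : ℝ, (‖y - c‖ ^ 2) ^ a = ‖y - c‖ ^ (2 * a) := fun y a => by
    rw [← Real.rpow_natCast, ← Real.rpow_mul (norm_nonneg _)]
    norm_num
  have hg : ∀ᶠ t in 𝓝 (‖x - c‖ ^ 2),
      HasDerivAt (fun t : ℝ => t ^ (p / 2)) (p / 2 * t ^ (p / 2 - 1)) t := by
    filter_upwards [Ioi_mem_nhds hq] with t ht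
    simpa using Real.hasDerivAt_rpow_const (p := p / 2) (Or.inl (ne_of_gt ht))
  have hg' := (Real.hasDerivAt_rpow_const (p := p / 2 - 1) (Or.inl hq.ne')).const_mul (p / 2)
  have hfun : (fun y => ‖y - c‖ ^ p) = fun y => (‖y - c‖ ^ 2) ^ (p / 2) := by
    funext y
    rw [hsq]
    ring_nf
  rw [hfun, lap_comp_normSq_sub hg hg', Real.rpow_sub_one hq.ne' (p / 2 - 1),
    show p - 2 = 2 * (p / 2 - 1) by ring, ← hsq]
  field_simp
  ring

theorem hasDerivAt_sub_rpow (a b : ℝ) {t : ℝ} (ht : t < b) :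
    HasDerivAt (fun s => (b - s) ^ a) (-a * (b - t) ^ (a - 1)) t := by
  simpa using ((hasDerivAt_id t).const_sub b).rpow_const (p := a) (Or.inl (sub_ne_zero.2 ht.ne'))

section Barrier

/-- A supersolution of `lap ψ = ψ⁵` on `ball x₀ ρ` that blows up on the sphere, so that it controls
solutions inside independently of their boundary values; the factor `2√ρ` gives
`lap ψ = (3/16) ψ⁵`. -/
def kellerOssermanBarrier (x₀ : E3) (ρ : ℝ) (y : E3) : ℝ :=
  2 * √ρ * (ρ ^ 2 - ‖y - x₀‖ ^ 2) ^ (-(1 / 2 : ℝ))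

variable {x₀ y : E3} {ρ : ℝ}

theorem sq_sub_normSq_pos_of_mem_ball (hy : y ∈ ball x₀ ρ) : 0 < ρ ^ 2 - ‖y - x₀‖ ^ 2 := by
  rw [mem_ball_iff_norm] at hy
  nlinarith [norm_nonneg (y - x₀)]

theorem kellerOssermanBarrier_self (hρ : 0 < ρ) : kellerOssermanBarrier x₀ ρ x₀ = 2 / √ρ := by
  have hsqrt : ρ = √ρ * √ρ := (Real.mul_self_sqrt hρ.le).symm
  rw [kellerOssermanBarrier, sub_self, norm_zero, zero_pow two_ne_zero, sub_zero,
    Real.rpow_neg (sq_nonneg ρ), ← Real.sqrt_eq_rpow, Real.sqrt_sq hρ.le]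
  nth_rw 2 [hsqrt]
  field_simp

theorem kellerOssermanBarrier_pos (hy : y ∈ ball x₀ ρ) : 0 < kellerOssermanBarrier x₀ ρ y := by
  have hρ : 0 < ρ := (dist_nonneg.trans_lt hy)
  have := Real.rpow_pos_of_pos (sq_sub_normSq_pos_of_mem_ball hy) (-(1 / 2))
  unfold kellerOssermanBarrier
  positivity

theorem contDiffAt_kellerOssermanBarrier (hy : y ∈ ball x₀ ρ) :
    ContDiffAt ℝ 2 (kellerOssermanBarrier x₀ ρ) y :=
  contDiffAt_const.mul <| (contDiffAt_const.sub
    ((contDiff_id.sub contDiff_const).norm_sq ℝ).contDiffAt).rpow_const_of_ne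
      (sq_sub_normSq_pos_of_mem_ball hy).ne'

theorem lap_kellerOssermanBarrier (hy : y ∈ ball x₀ ρ) :
    lap (kellerOssermanBarrier x₀ ρ) y = 3 / 16 * kellerOssermanBarrier x₀ ρ y ^ 5 := by
  have hρ : 0 < ρ := (dist_nonneg.trans_lt hy)
  set s := ρ ^ 2 - ‖y - x₀‖ ^ 2 with hs_def
  have hs : 0 < s := sq_sub_normSq_pos_of_mem_ball hy
  have hlt : ‖y - x₀‖ ^ 2 < ρ ^ 2 := by linarith
  have hg : ∀ᶠ t in 𝓝 (‖y - x₀‖ ^ 2), HasDerivAt (fun t => (ρ ^ 2 - t) ^ (-(1 / 2 : ℝ)))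
      (-(-(1 / 2)) * (ρ ^ 2 - t) ^ (-(1 / 2 : ℝ) - 1)) t := by
    filter_upwards [Iio_mem_nhds hlt] with t ht
    exact hasDerivAt_sub_rpow _ _ ht
  have hg' := (hasDerivAt_sub_rpow (-(1 / 2 : ℝ) - 1) _ hlt).const_mul (-(-(1 / 2 : ℝ)))
  have hlap : lap (fun z => (ρ ^ 2 - ‖z - x₀‖ ^ 2) ^ (-(1 / 2 : ℝ))) y
      = 3 * ρ ^ 2 * s ^ (-(5 / 2 : ℝ)) := by
    rw [lap_comp_normSq_sub hg hg', ← hs_def, show -(1 / 2 : ℝ) - 1 = -(5 / 2) + 1 by norm_num,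
      Real.rpow_add_one hs.ne', show -(5 / 2 : ℝ) + 1 - 1 = -(5 / 2) by norm_num]
    rw [hs_def]
    ring
  have hpow : (s ^ (-(1 / 2 : ℝ))) ^ 5 = s ^ (-(5 / 2 : ℝ)) := by
    rw [← Real.rpow_natCast, ← Real.rpow_mul hs.le]
    norm_num
  have hsqrt : √ρ ^ 2 = ρ := Real.sq_sqrt hρ.le
  unfold kellerOssermanBarrier
  rw [lap_const_mul, hlap, mul_pow, hpow]
  linear_combination (-6 * √ρ * s ^ (-(5 / 2 : ℝ)) * (√ρ ^ 2 + ρ)) * hsqrt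

end Barrier

theorem exists_forall_le_kellerOssermanBarrier {x₀ : E3} {ρ : ℝ} (hρ : 0 < ρ) (M : ℝ) :
    ∃ r < ρ, ∀ y ∈ ball x₀ ρ, r < dist y x₀ → M ≤ kellerOssermanBarrier x₀ ρ y := by
  have hsq : Tendsto (fun d : ℝ => ρ ^ 2 - d ^ 2) (𝓝[<] ρ) (𝓝[>] 0) := by
    refine tendsto_nhdsWithin_iff.2 ⟨?_, ?_⟩
    · have h : Tendsto (fun d : ℝ => ρ ^ 2 - d ^ 2) (𝓝 ρ) (𝓝 (ρ ^ 2 - ρ ^ 2)) :=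
        (continuous_const.sub (continuous_pow 2)).tendsto ρ
      simpa using h.mono_left nhdsWithin_le_nhds
    · filter_upwards [Ioo_mem_nhdsLT hρ] with d hd
      exact sub_pos.2 (pow_lt_pow_left₀ hd.2 hd.1.le two_ne_zero)
  have hblow : Tendsto (fun d : ℝ => 2 * √ρ * (ρ ^ 2 - d ^ 2) ^ (-(1 / 2 : ℝ))) (𝓝[<] ρ) atTop :=
    ((tendsto_rpow_neg_nhdsGT_zero (by norm_num)).comp hsq).const_mul_atTop (by positivity)
  obtain ⟨r, hr, hsub⟩ := mem_nhdsLT_iff_exists_Ioo_subset.1 (hblow.eventually_ge_atTop M)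
  refine ⟨r, hr, fun y hy hry => ?_⟩
  simpa [kellerOssermanBarrier, dist_eq_norm] using hsub ⟨hry, hy⟩

theorem le_of_mul_add_pow_five_le {β p w κ : ℝ} (hp : 0 ≤ p) (hpw : p < w) (hκ : 0 ≤ κ)
    (hβ : 2 * |β| ≤ κ ^ 4) (h : β * w + w ^ 5 ≤ 3 / 16 * p ^ 5) : w ≤ κ := by
  have hw : 0 < w := hp.trans_lt hpw
  have hp5 : p ^ 5 ≤ w ^ 5 := pow_le_pow_left₀ hp hpw.le 5
  have hβw : -(β * w) ≤ |β| * w := by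
    rw [← neg_mul]
    exact mul_le_mul_of_nonneg_right (neg_le_abs β) hw.le
  have hw4 : w ^ 4 ≤ κ ^ 4 := by
    have : 13 / 16 * w ^ 4 * w ≤ κ ^ 4 / 2 * w := by nlinarith
    nlinarith [le_of_mul_le_mul_right this hw, pow_nonneg hκ 4]
  exact (pow_le_pow_iff_left₀ hw.le hκ (by norm_num)).1 hw4

theorem keller_osserman_bound {x₀ : E3} {ρ κ : ℝ} {b v : E3 → ℝ} (hρ : 0 < ρ) (hκ : 0 ≤ κ)
    (hb : ∀ y ∈ ball x₀ ρ, 2 * |b y| ≤ κ ^ 4)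
    (hcont : ContinuousOn v (closedBall x₀ ρ)) (hsmooth : ContDiffOn ℝ 2 v (ball x₀ ρ))
    (heq : ∀ y ∈ ball x₀ ρ, lap v y = b y * v y + v y ^ 5) :
    v x₀ ≤ 2 / √ρ + κ := by
  set ψ := kellerOssermanBarrier x₀ ρ
  obtain ⟨M, hM⟩ := (isCompact_closedBall x₀ ρ).bddAbove_image hcont
  have hcoercive : ∀ N, ∃ r < ρ, ∀ y ∈ ball x₀ ρ, r < dist y x₀ → N ≤ ψ y - v y := fun N => by
    obtain ⟨r, hr, hψ⟩ := exists_forall_le_kellerOssermanBarrier hρ (N + M)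
    refine ⟨r, hr, fun y hy hry => ?_⟩
    have hvM := hM (mem_image_of_mem v (ball_subset_closedBall hy))
    linarith [hψ y hy hry]
  have hψcont : ContinuousOn ψ (ball x₀ ρ) := fun y hy =>
    (contDiffAt_kellerOssermanBarrier hy).continuousAt.continuousWithinAt
  obtain ⟨z, hz, hmin⟩ := exists_isMinOn_ball_of_forall_le
    (hψcont.sub (hcont.mono ball_subset_closedBall)) hρ hcoercive
  have hcenter : ψ z - v z ≤ ψ x₀ - v x₀ := hmin (mem_ball_self hρ)
  have hψx₀ : ψ x₀ = 2 / √ρ := kellerOssermanBarrier_self hρ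
  suffices v z - ψ z ≤ κ by linarith
  rcases le_or_gt (v z) (ψ z) with hle | hlt
  · linarith
  have hvz : ContDiffAt ℝ 2 v z := hsmooth.contDiffAt (isOpen_ball.mem_nhds hz)
  have hψz : ContDiffAt ℝ 2 ψ z := contDiffAt_kellerOssermanBarrier hz
  have hlap := lap_nonneg_of_isLocalMin (hψz.sub hvz) (hmin.isLocalMin (isOpen_ball.mem_nhds hz))
  rw [lap_sub hψz hvz, lap_kellerOssermanBarrier hz, heq z hz] at hlap
  have hψpos : 0 < ψ z := kellerOssermanBarrier_pos hz
  linarith [le_of_mul_add_pow_five_le hψpos.le hlt hκ (hb z hz) (by linarith)]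

theorem neg_le_of_exterior_solution {R : ℝ} {b u : E3 → ℝ} (hR : 0 ≤ R)
    (hb : ∀ y : E3, R < ‖y‖ → 2 * |b y| ≤ ‖y‖⁻¹ ^ 4)
    (hcont : ContinuousOn u {y | R ≤ ‖y‖}) (hsmooth : ContDiffOn ℝ 2 u {y | R < ‖y‖})
    (heq : ∀ y : E3, R < ‖y‖ → lap u y = b y * u y + u y ^ 5) {x : E3} (hx : R < ‖x‖) :
    -u x ≤ 2 / √((‖x‖ - R) / 2) + 2 / (‖x‖ + R) := by
  have hρ : 0 < (‖x‖ - R) / 2 := by linarith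
  have hball : ∀ y ∈ closedBall x ((‖x‖ - R) / 2), (‖x‖ + R) / 2 ≤ ‖y‖ := fun y hy => by
    have := norm_sub_norm_le x y
    rw [← dist_eq_norm, dist_comm] at this
    linarith [mem_closedBall.1 hy]
  have hext : ∀ y ∈ closedBall x ((‖x‖ - R) / 2), R < ‖y‖ := fun y hy => by
    linarith [hball y hy]
  refine keller_osserman_bound (b := b) (v := fun y => -u y) hρ (by positivity) (fun y hy => ?_)
    (hcont.neg.mono fun y hy => (hext y hy).le)
    (hsmooth.neg.mono fun y hy => hext y (ball_subset_closedBall hy))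
    (fun y hy => ?_)
  · have hy' := ball_subset_closedBall hy
    have hinv : ‖y‖⁻¹ ≤ 2 / (‖x‖ + R) := by
      rw [← inv_div]
      exact inv_anti₀ (by linarith) (hball y hy')
    calc 2 * |b y| ≤ ‖y‖⁻¹ ^ 4 := hb y (hext y hy')
      _ ≤ (2 / (‖x‖ + R)) ^ 4 := pow_le_pow_left₀ (by positivity) hinv 4
  · rw [lap_neg, heq y (hext y (ball_subset_closedBall hy))]
    ring

theorem eventually_neg_lt_of_exterior_solution {R : ℝ} {b u : E3 → ℝ} (hR : 0 ≤ R)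
    (hb : ∀ y : E3, R < ‖y‖ → 2 * |b y| ≤ ‖y‖⁻¹ ^ 4)
    (hcont : ContinuousOn u {y | R ≤ ‖y‖}) (hsmooth : ContDiffOn ℝ 2 u {y | R < ‖y‖})
    (heq : ∀ y : E3, R < ‖y‖ → lap u y = b y * u y + u y ^ 5) {T : ℝ} (hT : 0 < T) :
    ∀ᶠ x in cobounded E3, -T < u x := by
  have hlim : Tendsto (fun r => 2 / √((r - R) / 2) + 2 / (r + R)) atTop (𝓝 0) := by
    have hsub : Tendsto (fun r : ℝ => (r - R) / 2) atTop atTop :=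
      (tendsto_atTop_add_const_right _ (-R) tendsto_id).atTop_div_const two_pos
    simpa using (tendsto_const_nhds.div_atTop (Real.tendsto_sqrt_atTop.comp hsub)).add
      (tendsto_const_nhds.div_atTop (tendsto_atTop_add_const_right _ R tendsto_id))
  filter_upwards [(hlim.comp tendsto_norm_cobounded_atTop).eventually (gt_mem_nhds hT),
    tendsto_norm_cobounded_atTop.eventually_gt_atTop R] with x hxT hxR
  simp only [Function.comp_apply] at hxT
  linarith [neg_le_of_exterior_solution hR hb hcont hsmooth heq hxR]

section ExteriorBarrier

/-- `1/‖y‖` is harmonic; the term `R/‖y‖²` supplies the positive Laplacian `2R/‖y‖⁴` that beats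
`b u + u⁵` wherever `u ≤ φ`. -/
def exteriorBarrier (R : ℝ) (y : E3) : ℝ := (‖y‖⁻¹ + R * ‖y‖⁻¹ ^ 2) / 4

variable {R : ℝ} {y : E3}

theorem exteriorBarrier_eq_rpow (R : ℝ) :
    exteriorBarrier R = fun y => 1 / 4 * (‖y‖ ^ (-1 : ℝ) + R * ‖y‖ ^ (-2 : ℝ)) := by
  funext y
  rw [exteriorBarrier, Real.rpow_neg_one, Real.rpow_neg (norm_nonneg y), Real.rpow_two, inv_pow]
  ring

theorem contDiffAt_norm_rpow {p : ℝ} (hy : y ≠ 0) : ContDiffAt ℝ 2 (fun z : E3 => ‖z‖ ^ p) y :=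
  (contDiffAt_norm ℝ hy).rpow_const_of_ne (norm_ne_zero_iff.2 hy)

theorem contDiffAt_exteriorBarrier (hy : y ≠ 0) : ContDiffAt ℝ 2 (exteriorBarrier R) y := by
  rw [exteriorBarrier_eq_rpow]
  exact contDiffAt_const.mul ((contDiffAt_norm_rpow hy).add
    (contDiffAt_const.mul (contDiffAt_norm_rpow hy)))

theorem lap_exteriorBarrier (hy : y ≠ 0) : lap (exteriorBarrier R) y = R / 2 * ‖y‖⁻¹ ^ 4 := by
  have hlap (p : ℝ) : lap (fun z : E3 => ‖z‖ ^ p) y = p * (p + 1) * ‖y‖ ^ (p - 2) := by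
    simpa using lap_norm_sub_rpow p (c := 0) hy
  rw [exteriorBarrier_eq_rpow, lap_const_mul, lap_add (contDiffAt_norm_rpow hy)
    (contDiffAt_const.mul (contDiffAt_norm_rpow hy)), lap_const_mul, hlap, hlap,
    show (-2 : ℝ) - 2 = -((4 : ℕ) : ℝ) by norm_num, Real.rpow_neg (norm_nonneg y),
    Real.rpow_natCast, inv_pow]
  ring

theorem exteriorBarrier_le (hy : R ≤ ‖y‖) : exteriorBarrier R y ≤ ‖y‖⁻¹ / 2 := by
  have hRy : R * ‖y‖⁻¹ ≤ 1 := by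
    rcases (norm_nonneg y).eq_or_lt with h | h
    · simp [← h]
    · exact (div_le_one h).2 hy
  have := mul_le_mul_of_nonneg_right hRy (inv_nonneg.2 (norm_nonneg y))
  unfold exteriorBarrier
  nlinarith

theorem inv_norm_div_four_le_exteriorBarrier (hR : 0 ≤ R) :
    ‖y‖⁻¹ / 4 ≤ exteriorBarrier R y := by
  unfold exteriorBarrier
  have : 0 ≤ R * ‖y‖⁻¹ ^ 2 := by positivity
  linarith

theorem tendsto_exteriorBarrier_cobounded (R : ℝ) :
    Tendsto (exteriorBarrier R) (cobounded E3) (𝓝 0) := by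
  have h : Tendsto (fun y : E3 => ‖y‖⁻¹) (cobounded E3) (𝓝 0) :=
    tendsto_inv_atTop_zero.comp tendsto_norm_cobounded_atTop
  have hlim := (h.add ((h.pow 2).const_mul R)).div_const 4
  rwa [zero_pow two_ne_zero, mul_zero, add_zero, zero_div] at hlim

end ExteriorBarrier

theorem mul_add_pow_five_lt {β w t R : ℝ} (ht : 0 < t) (ht1 : t ≤ 1) (hR : 1 < R)
    (hβ : 2 * |β| ≤ t ^ 4) (hw : w ≤ t / 2) : β * w + w ^ 5 < R / 2 * t ^ 4 := by
  have ht4 : 0 < t ^ 4 := by positivity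
  have hβ1 : |β| ≤ 1 / 2 := by nlinarith [pow_le_one₀ ht.le ht1 (n := 4)]
  rcases le_or_gt w 0 with hw0 | hw0
  · have hβw : β * w ≤ |β| * -w := by
      rw [← abs_of_nonpos hw0, ← abs_mul]
      exact le_abs_self _
    rcases le_or_gt (-w) 1 with hw1 | hw1
    · have hw5 : w ^ 5 ≤ 0 := Odd.pow_nonpos (by decide) hw0
      nlinarith [mul_le_mul_of_nonneg_left hw1 (abs_nonneg β)]
    · have hw5 : w ^ 5 ≤ w := by nlinarith [one_le_pow₀ hw1.le (n := 4)]
      nlinarith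
  · have hβw : β * w ≤ |β| * w := mul_le_mul_of_nonneg_right (le_abs_self β) hw0.le
    have hw5 : w ^ 5 ≤ (t / 2) ^ 5 := pow_le_pow_left₀ hw0.le hw 5
    nlinarith [mul_le_mul_of_nonneg_right hβ hw0.le]

theorem two_mul_le_inv_pow_of_rpow_mul_le {r β c : ℝ} {n : ℕ} (hr : 1 ≤ r) (hn : n ≤ β)
    (hc : 0 ≤ c) (h : r ^ β * c ≤ 1 / 2) : 2 * c ≤ r⁻¹ ^ n := by
  have hrn : r ^ n ≤ r ^ β := by
    rw [← Real.rpow_natCast]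
    exact Real.rpow_le_rpow_of_exponent_le hr hn
  have hpos : 0 < r ^ n := by positivity
  rw [inv_pow, ← one_div, le_div_iff₀ hpos]
  nlinarith [mul_le_mul_of_nonneg_right hrn hc]

theorem exteriorBarrier_le_of_exterior_solution {R : ℝ} {b u : E3 → ℝ} (hR : 1 < R)
    (hb : ∀ y : E3, R < ‖y‖ → 2 * |b y| ≤ ‖y‖⁻¹ ^ 4)
    (hcont : ContinuousOn u {y | R ≤ ‖y‖}) (hsmooth : ContDiffOn ℝ 2 u {y | R < ‖y‖})
    (heq : ∀ y : E3, R < ‖y‖ → lap u y = b y * u y + u y ^ 5)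
    (hbdry : ∀ y : E3, ‖y‖ = R → 1 ≤ u y) {x : E3} (hx : R < ‖x‖) :
    exteriorBarrier R x ≤ u x := by
  have hne : ∀ {y : E3}, R ≤ ‖y‖ → y ≠ 0 := fun hy h => by
    rw [h, norm_zero] at hy
    linarith
  suffices 0 ≤ u x - exteriorBarrier R x by linarith
  refine nonneg_of_forall_not_isLocalMin (w := fun y => u y - exteriorBarrier R y)
    (hcont.sub fun y hy => (contDiffAt_exteriorBarrier (hne hy)).continuousAt.continuousWithinAt)
    (fun y hy => ?_) (fun T hT => ?_) (fun y hy hneg hmin => ?_) hx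
  · have := exteriorBarrier_le (R := R) hy.ge
    rw [hy] at this
    linarith [hbdry y hy, inv_le_one_of_one_le₀ hR.le]
  · filter_upwards [eventually_neg_lt_of_exterior_solution (by linarith) hb hcont hsmooth heq
      (half_pos hT), (tendsto_exteriorBarrier_cobounded R).eventually (gt_mem_nhds (half_pos hT))]
      with y h₁ h₂
    linarith
  · have hy0 := hne hy.le
    have hu : ContDiffAt ℝ 2 u y :=
      hsmooth.contDiffAt ((isOpen_lt continuous_const continuous_norm).mem_nhds hy)
    have hφ := contDiffAt_exteriorBarrier (R := R) hy0
    have hlap := lap_nonneg_of_isLocalMin (hu.sub hφ) hmin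
    rw [lap_sub hu hφ, heq y hy, lap_exteriorBarrier hy0] at hlap
    have ht : 0 < ‖y‖⁻¹ := inv_pos.2 (by linarith)
    have ht1 : ‖y‖⁻¹ ≤ 1 := inv_le_one_of_one_le₀ (by linarith)
    have hw : u y ≤ ‖y‖⁻¹ / 2 := by linarith [exteriorBarrier_le (R := R) hy.le]
    linarith [mul_add_pow_five_lt ht ht1 hR (hb y hy) hw]

/-- Exterior lower bound: for `R, β₁` sufficiently large there are `ε, δ > 0` such that any
solution of `−Δu + bu + u⁵ = 0` on `{|x| > R}` with small `b` and `u ≥ 1` on `∂B_R`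
satisfies `|u(x)| ≥ ε/|x|`. -/
theorem stmt8 :
    ∃ R₀ β₀ : ℝ, ∀ R β₁ : ℝ, R₀ ≤ R → β₀ ≤ β₁ →
      ∃ ε δ : ℝ, 0 < ε ∧ 0 < δ ∧
        ∀ b u : E3 → ℝ,
          (∀ x : E3, R < ‖x‖ → ‖x‖ ^ β₁ * |b x| < δ) →
          ContinuousOn u {x : E3 | R ≤ ‖x‖} →
          ContDiffOn ℝ 2 u {x : E3 | R < ‖x‖} →
          (∀ x : E3, R < ‖x‖ → -lap u x + b x * u x + u x ^ 5 = 0) →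
          (∀ x : E3, ‖x‖ = R → 1 ≤ u x) →
          ∀ x : E3, R < ‖x‖ → ε / ‖x‖ ≤ |u x| := by
  refine ⟨2, 4, fun R β₁ hR hβ => ⟨1 / 4, 1 / 2, by norm_num, by norm_num, ?_⟩⟩
  intro b u hb hcont hsmooth heq hbdry x hx
  have hb' : ∀ y : E3, R < ‖y‖ → 2 * |b y| ≤ ‖y‖⁻¹ ^ 4 := fun y hy =>
    two_mul_le_inv_pow_of_rpow_mul_le (by linarith) (by exact_mod_cast hβ) (abs_nonneg _)
      (hb y hy).le
  have heq' : ∀ y : E3, R < ‖y‖ → lap u y = b y * u y + u y ^ 5 := fun y hy => by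
    linarith [heq y hy]
  calc 1 / 4 / ‖x‖ = ‖x‖⁻¹ / 4 := by ring
    _ ≤ exteriorBarrier R x := inv_norm_div_four_le_exteriorBarrier (by linarith)
    _ ≤ u x :=
      exteriorBarrier_le_of_exterior_solution (by linarith) hb' hcont hsmooth heq' hbdry hx
    _ ≤ |u x| := le_abs_self _

end
end
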